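/- Let φ : X → ℝ^d with ‖φ(x)‖₂ ≤ 1 for all x, let λ' > 0, and let X_n be any sequence of points. Then the 'information gain' Σ_{k=0}^{n−1} log(1 + σ²_k(x_{k+1}) / λ') = log det(I_n + (1/λ') K_{X_n}) ≤ d · log(1 + λ̂_n / λ'), where K_{X_n} is the kernel matrix of the linear kernel k(x,x') = φ(x)ᵀφ(x'), σ²_k denotes the posterior variance after the first k points, and λ̂_n is the largest eigenvalue of Φ_nᵀΦ_n (which is at most n). -/

import Mathlib

/-!
Adding the points one at a time, the Schur complement of the last diagonal entry of
`K_{X_{k+1}} + λ'I` is `λ' + σ²_k(x_{k+1})`, so each new point multiplies `det(K + λ'I)` by that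
factor and the information gain telescopes to `log det(I + K_{X_n}/λ')`. By Sylvester's identity
this is `log det(I_d + ΦₙᵀΦₙ/λ')`, a sum of `d` terms `log(1 + μᵢ/λ')` with `μᵢ ≤ λ̂ₙ`; finally
`λ̂ₙ ≤ tr(ΦₙᵀΦₙ) = tr(ΦₙΦₙᵀ) = ∑ ‖φ(xᵢ)‖² ≤ n`.
-/

open Matrix

/-- Regularized posterior (conditional) kernel of the linear kernel
`k(a,b) = ⟪φ a, φ b⟫` after conditioning on the points `xs` with regularization `lam`:
`k_X(a,b) = k(a,b) − k_X(a)ᵀ (K_X + λ I)⁻¹ k_X(b)`.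
For `n = 0` this is the prior kernel; the diagonal `postK φ lam xs x x` is `σ²_X(x)`. -/
noncomputable def postK {α E : Type*} [NormedAddCommGroup E] [InnerProductSpace ℝ E]
    {n : ℕ} (φ : α → E) (lam : ℝ) (xs : Fin n → α) (a b : α) : ℝ :=
  (inner ℝ (φ a) (φ b) : ℝ) -
    (fun i => (inner ℝ (φ (xs i)) (φ a) : ℝ)) ⬝ᵥ
      ((Matrix.of (fun i j => (inner ℝ (φ (xs i)) (φ (xs j)) : ℝ))
          + lam • (1 : Matrix (Fin n) (Fin n) ℝ))⁻¹).mulVec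
        (fun i => (inner ℝ (φ (xs i)) (φ b) : ℝ))

namespace Matrix

theorem det_succ_eq_det_mul_schur {R : Type*} [CommRing R] {k : ℕ}
    (M : Matrix (Fin (k + 1)) (Fin (k + 1)) R)
    [Invertible (M.submatrix Fin.castSucc Fin.castSucc)] :
    M.det = (M.submatrix Fin.castSucc Fin.castSucc).det *
      (M (Fin.last k) (Fin.last k) - (fun j => M (Fin.last k) j.castSucc) ⬝ᵥ
        (M.submatrix Fin.castSucc Fin.castSucc)⁻¹ *ᵥ fun i => M i.castSucc (Fin.last k)) := by
  let N := M.submatrix finSumFinEquiv finSumFinEquiv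
  have : Invertible N.toBlocks₁₁ := ‹_›
  have hN : M.det = N.det := (det_submatrix_equiv_self _ _).symm
  rw [hN, ← fromBlocks_toBlocks N, det_fromBlocks₁₁, det_fin_one, sub_apply,
    invOf_eq_nonsing_inv, dotProduct_mulVec]
  rfl

theorem IsHermitian.det_one_add_smul {m : Type*} [Fintype m] [DecidableEq m]
    {A : Matrix m m ℝ} (hA : A.IsHermitian) (c : ℝ) :
    (1 + c • A).det = ∏ i, (1 + c * hA.eigenvalues i) := by
  have hcfc : 1 + c • A = cfc (fun x : ℝ => 1 + c * x) A := by
    rw [cfc_add .., cfc_const_one .., cfc_const_mul .., cfc_id' ..]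
  rw [hcfc, hA.cfc_eq]
  simp [IsHermitian.cfc, -Unitary.conjStarAlgAut_apply]

theorem PosSemidef.log_det_one_add_smul_le {m : Type*} [Fintype m] [DecidableEq m]
    {A : Matrix m m ℝ} (hA : A.PosSemidef) {c : ℝ} (hc : 0 ≤ c) :
    Real.log (1 + c • A).det ≤
      Fintype.card m * Real.log (1 + c * ⨆ i, hA.isHermitian.eigenvalues i) := by
  set μ := hA.isHermitian.eigenvalues
  have hpos : ∀ i, 0 < 1 + c * μ i := fun i =>
    add_pos_of_pos_of_nonneg one_pos (mul_nonneg hc (hA.eigenvalues_nonneg i))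
  rw [hA.isHermitian.det_one_add_smul, Real.log_prod fun i _ => (hpos i).ne']
  calc ∑ i, Real.log (1 + c * μ i) ≤ ∑ _i : m, Real.log (1 + c * ⨆ j, μ j) := by
        gcongr with i
        · exact hpos i
        · exact le_ciSup (Set.finite_range μ).bddAbove i
    _ = _ := by rw [Finset.sum_const, Finset.card_univ, nsmul_eq_mul]

theorem PosSemidef.iSup_eigenvalues_le_trace {m : Type*} [Fintype m] [DecidableEq m]
    {A : Matrix m m ℝ} (hA : A.PosSemidef) :
    ⨆ i, hA.isHermitian.eigenvalues i ≤ A.trace := by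
  refine Real.iSup_le (fun i => ?_) hA.trace_nonneg
  rw [hA.isHermitian.trace_eq_sum_eigenvalues]
  exact Finset.single_le_sum (fun j _ => hA.eigenvalues_nonneg j) (Finset.mem_univ i)

section Gram

variable {ι : Type*} [Fintype ι] {E : Type*} [NormedAddCommGroup E] [InnerProductSpace ℝ E]

theorem posDef_gram_add_smul_one [DecidableEq ι] (v : ι → E) {lam : ℝ} (hlam : 0 < lam) :
    (gram ℝ v + lam • (1 : Matrix ι ι ℝ)).PosDef := by
  refine PosDef.posSemidef_add (posSemidef_gram ℝ v) ?_
  rw [smul_one_eq_diagonal]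
  exact PosDef.diagonal fun _ => hlam

theorem trace_gram (v : ι → E) : (gram ℝ v).trace = ∑ i, ‖v i‖ ^ 2 := by
  simp [trace, gram_apply]

theorem trace_gram_le_card {v : ι → E} (hv : ∀ i, ‖v i‖ ≤ 1) :
    (gram ℝ v).trace ≤ Fintype.card ι := by
  rw [trace_gram]
  calc ∑ i, ‖v i‖ ^ 2 ≤ ∑ _i : ι, (1 : ℝ) :=
        Finset.sum_le_sum fun i _ => pow_le_one₀ (norm_nonneg _) (hv i)
    _ = Fintype.card ι := by simp

end Gram

theorem mul_transpose_eq_gram {ι κ : Type*} [Fintype κ] {Φ : Matrix ι κ ℝ}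
    {v : ι → EuclideanSpace ℝ κ} (hΦ : ∀ i j, Φ i j = v i j) : Φ * Φᵀ = gram ℝ v := by
  ext i j
  simp [mul_apply, gram_apply, PiLp.inner_apply, hΦ, mul_comm]

end Matrix

section Posterior

variable {α E : Type*} [NormedAddCommGroup E] [InnerProductSpace ℝ E] (φ : α → E)
  {lam : ℝ} (hlam : 0 < lam)
include hlam

theorem det_gram_add_smul_one_succ {k : ℕ} (xs : Fin (k + 1) → α) :
    (gram ℝ (φ ∘ xs) + lam • (1 : Matrix _ _ ℝ)).det =
      (gram ℝ (φ ∘ xs ∘ Fin.castSucc) + lam • (1 : Matrix _ _ ℝ)).det *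
        (lam + postK φ lam (xs ∘ Fin.castSucc) (xs (Fin.last k)) (xs (Fin.last k))) := by
  set M := gram ℝ (φ ∘ xs) + lam • (1 : Matrix _ _ ℝ)
  have hsub : M.submatrix Fin.castSucc Fin.castSucc =
      gram ℝ (φ ∘ xs ∘ Fin.castSucc) + lam • (1 : Matrix _ _ ℝ) := by
    ext i j
    simp [M, gram_apply, one_apply]
  have : Invertible (M.submatrix Fin.castSucc Fin.castSucc) :=
    (hsub ▸ (posDef_gram_add_smul_one _ hlam).isUnit).invertible
  rw [det_succ_eq_det_mul_schur M, hsub]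
  congr 1
  have hdiag : M (Fin.last k) (Fin.last k) =
      lam + inner ℝ (φ (xs (Fin.last k))) (φ (xs (Fin.last k))) := by
    simp [M, gram_apply, add_comm]
  have hrow : (fun j : Fin k => M (Fin.last k) j.castSucc) =
      fun j => inner ℝ (φ (xs j.castSucc)) (φ (xs (Fin.last k))) := by
    ext j
    simp [M, gram_apply, (Fin.castSucc_lt_last j).ne', real_inner_comm]
  have hcol : (fun i : Fin k => M i.castSucc (Fin.last k)) =
      fun i => inner ℝ (φ (xs i.castSucc)) (φ (xs (Fin.last k))) := by
    ext i
    simp [M, gram_apply, (Fin.castSucc_lt_last i).ne]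
  rw [hdiag, hrow, hcol, add_sub_assoc]
  rfl

theorem prod_lam_add_postK_eq_det (xs : ℕ → α) (n : ℕ) :
    ∏ k ∈ Finset.range n, (lam + postK φ lam (fun i : Fin k => xs i) (xs k) (xs k)) =
      (gram ℝ (fun i : Fin n => φ (xs i)) + lam • (1 : Matrix _ _ ℝ)).det := by
  induction n with
  | zero => simp
  | succ n ih =>
    rw [Finset.prod_range_succ, ih]
    exact (det_gram_add_smul_one_succ φ hlam fun i : Fin (n + 1) => xs i).symm

theorem sum_log_one_add_postK_div_eq_log_det (xs : ℕ → α) (n : ℕ) :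
    ∑ k ∈ Finset.range n, Real.log (1 + postK φ lam (fun i : Fin k => xs i) (xs k) (xs k) / lam) =
      Real.log (1 + lam⁻¹ • gram ℝ (fun i : Fin n => φ (xs i))).det := by
  set G := gram ℝ (fun i : Fin n => φ (xs i))
  set σsq := fun k : ℕ => postK φ lam (fun i : Fin k => xs i) (xs k) (xs k)
  have hprod := prod_lam_add_postK_eq_det φ hlam xs n
  have hne : ∀ k ∈ Finset.range n, lam + σsq k ≠ 0 :=
    Finset.prod_ne_zero_iff.mp (hprod ▸ (posDef_gram_add_smul_one _ hlam).det_pos.ne')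
  have hscale : 1 + lam⁻¹ • G = lam⁻¹ • (G + lam • 1) := by
    rw [smul_add, smul_smul, inv_mul_cancel₀ hlam.ne', one_smul, add_comm]
  calc ∑ k ∈ Finset.range n, Real.log (1 + σsq k / lam)
      = ∑ k ∈ Finset.range n, Real.log (lam⁻¹ * (lam + σsq k)) := by
        congr! 2
        field_simp
    _ = Real.log (∏ k ∈ Finset.range n, lam⁻¹ * (lam + σsq k)) :=
        (Real.log_prod fun k hk => mul_ne_zero (inv_ne_zero hlam.ne') (hne k hk)).symm
    _ = Real.log (1 + lam⁻¹ • G).det := by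
        rw [Finset.prod_mul_distrib, Finset.prod_const, Finset.card_range, hprod, hscale,
          det_smul, Fintype.card_fin]

end Posterior

/-- Information gain bound: with `‖φ(x)‖ ≤ 1` and regularizer `λ' > 0`,
`∑_{k<n} log(1 + σ²_k(x_{k+1})/λ') = log det(I_n + (1/λ') K_{X_n}) ≤ d·log(1 + λ̂_n/λ')`,
where `λ̂_n` is the largest eigenvalue of `ΦₙᵀΦₙ`, which is at most `n`. -/
theorem information_gain_bound {α : Type*} {d : ℕ}
    (φ : α → EuclideanSpace ℝ (Fin d)) (hφ : ∀ x, ‖φ x‖ ≤ 1)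
    (lam : ℝ) (hlam : 0 < lam) (xs : ℕ → α) (n : ℕ)
    (Φn : Matrix (Fin n) (Fin d) ℝ) (hΦn : ∀ i j, Φn i j = φ (xs i) j)
    (hH : (Φnᵀ * Φn).IsHermitian) :
    (∑ k ∈ Finset.range n,
        Real.log (1 + postK φ lam (fun i : Fin k => xs i) (xs k) (xs k) / lam))
      = Real.log ((1 + lam⁻¹ • (Φn * Φnᵀ)).det)
    ∧ Real.log ((1 + lam⁻¹ • (Φn * Φnᵀ)).det)
        ≤ d * Real.log (1 + (⨆ i, hH.eigenvalues i) / lam)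
    ∧ (⨆ i, hH.eigenvalues i) ≤ n := by
  have hK : Φn * Φnᵀ = gram ℝ (fun i : Fin n => φ (xs i)) := mul_transpose_eq_gram hΦn
  have hPSD : (Φnᵀ * Φn).PosSemidef := by
    simpa using posSemidef_conjTranspose_mul_self Φn
  refine ⟨hK ▸ sum_log_one_add_postK_div_eq_log_det φ hlam xs n, ?_, ?_⟩
  · have hsylvester : (1 + lam⁻¹ • (Φn * Φnᵀ)).det = (1 + lam⁻¹ • (Φnᵀ * Φn)).det := by
      rw [← smul_mul, det_one_add_mul_comm, Matrix.mul_smul]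
    rw [hsylvester, div_eq_inv_mul]
    simpa using hPSD.log_det_one_add_smul_le (inv_nonneg.2 hlam.le)
  · calc ⨆ i, hH.eigenvalues i ≤ (Φnᵀ * Φn).trace := hPSD.iSup_eigenvalues_le_trace
      _ = (gram ℝ (fun i : Fin n => φ (xs i))).trace := by rw [trace_mul_comm, hK]
      _ ≤ n := by simpa using trace_gram_le_card fun i : Fin n => hφ (xs i)
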